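/- Define arccosh(u) := 2·log(√((u−1)/2) + √((u+1)/2)) using principal square roots and logarithm. Then for every real c < −1 and for u = c (a real point on the branch cut), arccosh(c) = log(−c + √(c²−1)) + π·i, where the square root and logarithm on the right are of positive real numbers. -/

import Mathlib

/-! For `c < -1` both radicands `(c ∓ 1)/2` are negative reals, so the two principal square roots
are `i√((1 - c)/2)` and `i√((-1 - c)/2)`. Their sum is `i r` with `r > 0`, whose principal
logarithm is `log r + πi/2`; doubling gives `log r² + πi`, and `r² = -c + √(c² - 1)`. -/

open Complex Real

lemma Complex.ofReal_neg_cpow_half {x : ℝ} (hx : 0 ≤ x) :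
    ((-x : ℝ) : ℂ) ^ (1 / 2 : ℂ) = Real.sqrt x * I := by
  rw [ofReal_cpow_of_nonpos (by linarith), ofReal_neg, neg_neg,
    show (π : ℂ) * I * (1 / 2) = π / 2 * I by ring, exp_pi_div_two_mul_I, Real.sqrt_eq_rpow,
    ofReal_cpow hx]
  norm_num

lemma Complex.log_ofReal_mul_I {r : ℝ} (hr : 0 < r) :
    log (r * I) = Real.log r + π / 2 * I := by
  rw [log_ofReal_mul hr I_ne_zero, log_I]

lemma Real.sq_sqrt_add_sqrt_of_le_neg_one {c : ℝ} (hc : c ≤ -1) :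
    (√((1 - c) / 2) + √((-1 - c) / 2)) ^ 2 = -c + √(c ^ 2 - 1) := by
  have hprod : √((1 - c) / 2) * √((-1 - c) / 2) = √(c ^ 2 - 1) / 2 := by
    rw [← Real.sqrt_mul (by linarith), show (1 - c) / 2 * ((-1 - c) / 2) = (c ^ 2 - 1) / 2 ^ 2 by
      ring, Real.sqrt_div' _ (by positivity), Real.sqrt_sq zero_le_two]
  rw [add_sq, mul_assoc, hprod, Real.sq_sqrt (by linarith), Real.sq_sqrt (by linarith)]
  ring

theorem arccosh_on_cut (c : ℝ) (hc : c < -1) :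
    2 * Complex.log ((((c : ℂ) - 1) / 2) ^ ((1 / 2 : ℂ)) +
        (((c : ℂ) + 1) / 2) ^ ((1 / 2 : ℂ))) =
      ((Real.log (-c + Real.sqrt (c ^ 2 - 1)) : ℝ) : ℂ) + (π : ℂ) * Complex.I := by
  set r := √((1 - c) / 2) + √((-1 - c) / 2) with hr
  have hr_pos : 0 < r := by positivity
  have hsum : (((c : ℂ) - 1) / 2) ^ (1 / 2 : ℂ) + (((c : ℂ) + 1) / 2) ^ (1 / 2 : ℂ) = r * I := by
    rw [show ((c : ℂ) - 1) / 2 = ((-((1 - c) / 2) : ℝ) : ℂ) by push_cast; ring,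
      show ((c : ℂ) + 1) / 2 = ((-((-1 - c) / 2) : ℝ) : ℂ) by push_cast; ring,
      ofReal_neg_cpow_half (by linarith), ofReal_neg_cpow_half (by linarith), hr]
    push_cast
    ring
  rw [hsum, log_ofReal_mul_I hr_pos, ← Real.sq_sqrt_add_sqrt_of_le_neg_one hc.le, ← hr,
    Real.log_pow]
  push_cast
  ring
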